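/- arXiv:2203.15031 — 3 statements merged into one kernel-verified Lean document; each statement's English description precedes it below -/
import Mathlib

section
/- The scaled Lasso objective L(β, σ) = ‖y − Xβ‖₂²/(2nσ) + σ/2 + λ₀‖β‖₁ is jointly convex in (β, σ); that is, L is convex on the convex set ℝᵖ × (0, ∞). -/
/-!
The map `(u, σ) ↦ u² / σ` is convex on the half-plane `σ > 0`: for positive weights `a + b = 1`
this is the two-term case of Sedrakyan's inequality
`(a u + b v)² / (a σ + b τ) ≤ (a u)² / (a σ) + (b v)² / (b τ)`.
Precomposing with the affine maps `(β, σ) ↦ (yᵢ - (Xβ)ᵢ, σ)` and summing over `i` makes the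
data-fit term convex; `σ / 2` is linear and `λ₀ ‖β‖₁` is a nonnegative multiple of a sum of
absolute values of coordinates.
-/

open Finset

theorem ConvexOn.sum {𝕜 E β ι : Type*} [Semiring 𝕜] [PartialOrder 𝕜] [AddCommMonoid E]
    [AddCommMonoid β] [PartialOrder β] [IsOrderedAddMonoid β] [SMul 𝕜 E] [Module 𝕜 β]
    {s : Set E} (t : Finset ι) {f : ι → E → β} (hs : Convex 𝕜 s)
    (hf : ∀ i ∈ t, ConvexOn 𝕜 s (f i)) :
    ConvexOn 𝕜 s fun x => ∑ i ∈ t, f i x := by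
  classical
  induction t using Finset.induction_on with
  | empty => simpa using convexOn_const (0 : β) hs
  | insert i t hi ih =>
    simp only [Finset.sum_insert hi]
    exact (hf i (mem_insert_self i t)).add (ih fun j hj => hf j (mem_insert_of_mem hj))

section HalfSpace

variable {𝕜 : Type*} [Field 𝕜] [LinearOrder 𝕜] [IsStrictOrderedRing 𝕜]

theorem convex_setOf_snd_pos (E : Type*) [AddCommGroup E] [Module 𝕜 E] :
    Convex 𝕜 {q : E × 𝕜 | 0 < q.2} :=
  convex_halfSpace_gt (LinearMap.snd 𝕜 E 𝕜).isLinear 0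

theorem convexOn_sq_div : ConvexOn 𝕜 {q : 𝕜 × 𝕜 | 0 < q.2} fun q => q.1 ^ 2 / q.2 := by
  refine convexOn_iff_forall_pos.2 ⟨convex_setOf_snd_pos 𝕜, ?_⟩
  rintro ⟨u, σ⟩ (hσ : 0 < σ) ⟨v, τ⟩ (hτ : 0 < τ) a b ha hb -
  have sedrakyan := sq_sum_div_le_sum_sq_div univ ![a * u, b * v] (g := ![a * σ, b * τ])
    (by simp [Fin.forall_fin_two, *])
  simp only [Fin.sum_univ_two, Matrix.cons_val_zero, Matrix.cons_val_one] at sedrakyan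
  calc (a * u + b * v) ^ 2 / (a * σ + b * τ)
      ≤ (a * u) ^ 2 / (a * σ) + (b * v) ^ 2 / (b * τ) := sedrakyan
    _ = a * (u ^ 2 / σ) + b * (v ^ 2 / τ) := by field_simp

theorem convexOn_affineMap_sq_div {E : Type*} [AddCommGroup E] [Module 𝕜 E] (r : E →ᵃ[𝕜] 𝕜) :
    ConvexOn 𝕜 {q : E × 𝕜 | 0 < q.2} fun q => r q.1 ^ 2 / q.2 :=
  convexOn_sq_div.comp_affineMap (r.prodMap (AffineMap.id 𝕜 𝕜))

end HalfSpace

theorem convexOn_univ_sum_abs (ι : Type*) [Fintype ι] :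
    ConvexOn ℝ Set.univ fun x : ι → ℝ => ∑ i, |x i| :=
  ConvexOn.sum univ convex_univ fun i _ =>
    convexOn_univ_norm.comp_linearMap (LinearMap.proj (R := ℝ) (φ := fun _ : ι => ℝ) i)

theorem scaledLasso_jointly_convex_general (n p : ℕ)
    (y : Fin n → ℝ) (X : Matrix (Fin n) (Fin p) ℝ) (lam0 : ℝ) (hlam0 : 0 ≤ lam0) :
    ConvexOn ℝ {q : (Fin p → ℝ) × ℝ | 0 < q.2}
      (fun q : (Fin p → ℝ) × ℝ =>
        (∑ i, (y i - X.mulVec q.1 i) ^ 2) / (2 * (n : ℝ) * q.2) + q.2 / 2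
          + lam0 * ∑ j, |q.1 j|) := by
  have hS : Convex ℝ {q : (Fin p → ℝ) × ℝ | 0 < q.2} := convex_setOf_snd_pos _
  have hfit : ConvexOn ℝ {q : (Fin p → ℝ) × ℝ | 0 < q.2}
      fun q => ∑ i, (y i - X.mulVec q.1 i) ^ 2 / q.2 :=
    ConvexOn.sum univ hS fun i _ =>
      (convexOn_affineMap_sq_div
        (AffineMap.const ℝ _ (y i) - (LinearMap.proj i ∘ₗ X.mulVecLin).toAffineMap)).congr
        fun q _ => by simp
  have hscale : ConvexOn ℝ {q : (Fin p → ℝ) × ℝ | 0 < q.2} fun q => q.2 / 2 :=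
    (((LinearMap.snd ℝ (Fin p → ℝ) ℝ).convexOn hS).smul (c := (2 : ℝ)⁻¹) (by norm_num)).congr
      fun q _ => by simp [div_eq_inv_mul]
  have hl1 : ConvexOn ℝ {q : (Fin p → ℝ) × ℝ | 0 < q.2} fun q => ∑ j, |q.1 j| :=
    ((convexOn_univ_sum_abs (Fin p)).comp_linearMap (LinearMap.fst ℝ _ ℝ)).subset
      (Set.subset_univ _) hS
  refine (((hfit.smul (c := (2 * (n : ℝ))⁻¹) (by positivity)).add hscale).add
    (hl1.smul hlam0)).congr fun q _ => ?_
  simp only [Pi.add_apply, smul_eq_mul, ← Finset.sum_div]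
  ring

/-- The scaled Lasso objective
`L(β, σ) = ‖y − Xβ‖₂²/(2nσ) + σ/2 + λ₀‖β‖₁`
is jointly convex in `(β, σ)` on the convex set `ℝᵖ × (0, ∞)`. -/
theorem scaledLasso_jointly_convex (n p : ℕ) (hn : 0 < n)
    (y : Fin n → ℝ) (X : Matrix (Fin n) (Fin p) ℝ) (lam0 : ℝ) (hlam0 : 0 ≤ lam0) :
    ConvexOn ℝ {q : (Fin p → ℝ) × ℝ | 0 < q.2}
      (fun q : (Fin p → ℝ) × ℝ =>
        (∑ i, (y i - X.mulVec q.1 i) ^ 2) / (2 * (n : ℝ) * q.2) + q.2 / 2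
          + lam0 * ∑ j, |q.1 j|) :=
  scaledLasso_jointly_convex_general n p y X lam0 hlam0
end

section
/- Scale invariance of the SPMESL estimator (Proposition 1, minimizer form): let X be an n×p real matrix with columns x₁,…,x_p, let s₁₁,…,s_pp > 0, let X̃ = XC with C = diag(s₁₁^{−1/2},…,s_pp^{−1/2}) (so x̃ⱼ = xⱼ/√sⱼⱼ), fix an index k and λ₀ ≥ 0. Define F^C(b, σ) = ‖x̃ₖ − Σ_{j≠k} bⱼ x̃ⱼ‖₂²/(2nσ) + σ/2 + λ₀ Σ_{j≠k} |bⱼ| and F^o(b, σ) = ‖xₖ − Σ_{j≠k} bⱼ xⱼ‖₂²/(2nσ) + σ/2 + λ₀ Σ_{j≠k} √sⱼⱼ |bⱼ|, both over the set {b ∈ ℝᵖ : bₖ = −1} × (0, ∞). Then (b, σ) minimizes F^C if and only if (b°, σ°) minimizes F^o, where b°ⱼ = √(sₖₖ/sⱼⱼ) · bⱼ for every j and σ° = √sₖₖ · σ; consequently the associated precision-matrix entries satisfy −b°ⱼ/(σ°)² = (sⱼⱼ sₖₖ)^{−1/2} · (−bⱼ/σ²) for all j, i.e., Ω̂° = C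 Ω̂^C C entrywise in column k. -/
/-- The scaled Lasso objective for column `k` with the scaled design `X̃ = XC`,
`C = diag(s₁₁^{−1/2},…,s_pp^{−1/2})`. -/
noncomputable def spmeslObjScaled (n p : ℕ) (X : Matrix (Fin n) (Fin p) ℝ)
    (s : Fin p → ℝ) (k : Fin p) (lam0 : ℝ) (b : Fin p → ℝ) (σ : ℝ) : ℝ :=
  (∑ i, (X i k / Real.sqrt (s k)
      - ∑ j ∈ Finset.univ.erase k, b j * (X i j / Real.sqrt (s j))) ^ 2) / (2 * (n : ℝ) * σ)
    + σ / 2 + lam0 * ∑ j ∈ Finset.univ.erase k, |b j|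

/-- The scaled Lasso objective for column `k` with the original design `X` and the
weighted penalty `λ₀ Σ_{j≠k} √sⱼⱼ |bⱼ|`. -/
noncomputable def spmeslObjOrig (n p : ℕ) (X : Matrix (Fin n) (Fin p) ℝ)
    (s : Fin p → ℝ) (k : Fin p) (lam0 : ℝ) (b : Fin p → ℝ) (σ : ℝ) : ℝ :=
  (∑ i, (X i k - ∑ j ∈ Finset.univ.erase k, b j * X i j) ^ 2) / (2 * (n : ℝ) * σ)
    + σ / 2 + lam0 * ∑ j ∈ Finset.univ.erase k, Real.sqrt (s j) * |b j|

/-!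
The rescaling `(b, σ) ↦ (b°, σ°)` is a bijection of the feasible set `{b k = -1, σ > 0}` onto
itself (because `b°ₖ = bₖ` and `√sₖₖ > 0`), and it multiplies the objective by a positive constant:
`F^o(b°, σ°) = √sₖₖ · F^C(b, σ)`, since the residual scales by `√sₖₖ` and `σ°` by the same
factor. A bijection that rescales the objective by a positive constant transports minimizers.
-/

open Function Set

theorem IsMinOn.comp_equiv_iff {α β γ : Type*} [Preorder γ] (e : α ≃ β) {g : β → γ} {t : Set β}
    {a : α} : IsMinOn (g ∘ e) (e ⁻¹' t) a ↔ IsMinOn g t (e a) := by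
  refine ⟨fun h => ?_, fun h => h.on_preimage e⟩
  simpa [comp_def] using h.comp_mapsTo (g := e.symm) (fun y hy => by simpa using hy) (by simp)

theorem isMinOn_const_mul_iff {α : Type*} {f : α → ℝ} {s : Set α} {a : α} {c : ℝ} (hc : 0 < c) :
    IsMinOn (fun x => c * f x) s a ↔ IsMinOn f s a := by
  simp only [isMinOn_iff, mul_le_mul_iff_right₀ hc]

theorem sqrt_mul_sqrt_div_cancel {a c : ℝ} (ha : 0 < a) (hc : 0 ≤ c) : √a * √(c / a) = √c := by
  rw [Real.sqrt_div hc, mul_div_cancel₀ _ (Real.sqrt_pos.2 ha).ne']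

section SPMESL

variable {n p : ℕ} (X : Matrix (Fin n) (Fin p) ℝ) {s : Fin p → ℝ} (hs : ∀ j, 0 < s j) (k : Fin p)
  (lam0 : ℝ)

def spmeslFeasible (k : Fin p) : Set ((Fin p → ℝ) × ℝ) := {x | x.1 k = -1 ∧ 0 < x.2}

theorem isMinOn_spmeslFeasible_iff (f : (Fin p → ℝ) → ℝ → ℝ) (b : Fin p → ℝ) (σ : ℝ) :
    IsMinOn (uncurry f) (spmeslFeasible k) (b, σ) ↔
      ∀ (b' : Fin p → ℝ) (σ' : ℝ), b' k = -1 → 0 < σ' → f b σ ≤ f b' σ' := by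
  simp [isMinOn_iff, spmeslFeasible]

noncomputable def spmeslRescale : ((Fin p → ℝ) × ℝ) ≃ ((Fin p → ℝ) × ℝ) :=
  (Equiv.piCongrRight fun j =>
      Equiv.mulLeft₀ (√(s k / s j)) (Real.sqrt_pos.2 (div_pos (hs k) (hs j))).ne').prodCongr
    (Equiv.mulLeft₀ (√(s k)) (Real.sqrt_pos.2 (hs k)).ne')

@[simp]
theorem spmeslRescale_apply (x : (Fin p → ℝ) × ℝ) :
    spmeslRescale hs k x = (fun j => √(s k / s j) * x.1 j, √(s k) * x.2) := rfl

theorem spmeslRescale_preimage_feasible :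
    spmeslRescale hs k ⁻¹' spmeslFeasible k = spmeslFeasible k := by
  ext ⟨b, σ⟩
  simp [spmeslFeasible, div_self (hs k).ne', Real.sqrt_pos.2 (hs k)]

include hs in
theorem spmesl_residual_rescale (b : Fin p → ℝ) (i : Fin n) :
    X i k - ∑ j ∈ Finset.univ.erase k, √(s k / s j) * b j * X i j =
      √(s k) * (X i k / √(s k) - ∑ j ∈ Finset.univ.erase k, b j * (X i j / √(s j))) := by
  rw [mul_sub, mul_div_cancel₀ _ (Real.sqrt_pos.2 (hs k)).ne', Finset.mul_sum]
  congr 1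
  refine Finset.sum_congr rfl fun j _ => ?_
  rw [← sqrt_mul_sqrt_div_cancel (hs j) (hs k).le]
  field_simp [(Real.sqrt_pos.2 (hs j)).ne']

include hs in
theorem spmesl_penalty_rescale (b : Fin p → ℝ) :
    ∑ j ∈ Finset.univ.erase k, √(s j) * |√(s k / s j) * b j| =
      √(s k) * ∑ j ∈ Finset.univ.erase k, |b j| := by
  rw [Finset.mul_sum]
  refine Finset.sum_congr rfl fun j _ => ?_
  rw [abs_mul, abs_of_pos (Real.sqrt_pos.2 (div_pos (hs k) (hs j))), ← mul_assoc,
    sqrt_mul_sqrt_div_cancel (hs j) (hs k).le]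

include hs in
theorem spmeslObjOrig_rescale (b : Fin p → ℝ) (σ : ℝ) :
    spmeslObjOrig n p X s k lam0 (fun j => √(s k / s j) * b j) (√(s k) * σ) =
      √(s k) * spmeslObjScaled n p X s k lam0 b σ := by
  have hsk : √(s k) ≠ 0 := (Real.sqrt_pos.2 (hs k)).ne'
  unfold spmeslObjOrig spmeslObjScaled
  simp only [spmesl_residual_rescale X hs k, spmesl_penalty_rescale hs k, mul_pow, ← Finset.mul_sum]
  rw [mul_left_comm (2 * (n : ℝ)), sq, mul_assoc (√(s k)) (√(s k)), mul_div_mul_left _ _ hsk]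
  ring

theorem isMinOn_spmeslObjOrig_rescale_iff (x : (Fin p → ℝ) × ℝ) :
    (x ∈ spmeslFeasible k ∧
        IsMinOn (uncurry (spmeslObjScaled n p X s k lam0)) (spmeslFeasible k) x) ↔
      (spmeslRescale hs k x ∈ spmeslFeasible k ∧
        IsMinOn (uncurry (spmeslObjOrig n p X s k lam0)) (spmeslFeasible k)
          (spmeslRescale hs k x)) := by
  have hcomp : uncurry (spmeslObjOrig n p X s k lam0) ∘ spmeslRescale hs k =
      fun y => √(s k) * uncurry (spmeslObjScaled n p X s k lam0) y :=
    funext fun y => spmeslObjOrig_rescale X hs k lam0 y.1 y.2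
  rw [← IsMinOn.comp_equiv_iff, hcomp, ← mem_preimage, spmeslRescale_preimage_feasible,
    isMinOn_const_mul_iff (Real.sqrt_pos.2 (hs k))]

end SPMESL

theorem neg_div_sq_rescale {a c : ℝ} (ha : 0 ≤ a) (hc : 0 ≤ c) (β σ : ℝ) :
    -(√(c / a) * β) / (√c * σ) ^ 2 = 1 / √(a * c) * (-β / σ ^ 2) := by
  rw [Real.sqrt_div hc, Real.sqrt_mul ha]
  rcases hc.eq_or_lt with rfl | hc
  · simp
  have := Real.sqrt_pos.2 hc
  field_simp

theorem spmesl_scale_invariance_general (n p : ℕ)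
    (X : Matrix (Fin n) (Fin p) ℝ) (s : Fin p → ℝ) (hs : ∀ j, 0 < s j)
    (k : Fin p) (lam0 : ℝ) (b : Fin p → ℝ) (σ : ℝ) :
    ((b k = -1 ∧ 0 < σ ∧
        ∀ (b' : Fin p → ℝ) (σ' : ℝ), b' k = -1 → 0 < σ' →
          spmeslObjScaled n p X s k lam0 b σ ≤ spmeslObjScaled n p X s k lam0 b' σ') ↔
      ((fun j => Real.sqrt (s k / s j) * b j) k = -1 ∧ 0 < Real.sqrt (s k) * σ ∧
        ∀ (b' : Fin p → ℝ) (σ' : ℝ), b' k = -1 → 0 < σ' →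
          spmeslObjOrig n p X s k lam0 (fun j => Real.sqrt (s k / s j) * b j)
              (Real.sqrt (s k) * σ)
            ≤ spmeslObjOrig n p X s k lam0 b' σ')) ∧
    (0 < σ → ∀ j : Fin p,
      -(Real.sqrt (s k / s j) * b j) / (Real.sqrt (s k) * σ) ^ 2
        = (1 / Real.sqrt (s j * s k)) * (-(b j) / σ ^ 2)) := by
  refine ⟨?_, fun _ j => neg_div_sq_rescale (hs j).le (hs k).le (b j) σ⟩
  have h := isMinOn_spmeslObjOrig_rescale_iff X hs k lam0 (b, σ)
  simp only [spmeslRescale_apply, isMinOn_spmeslFeasible_iff] at h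
  simpa only [spmeslFeasible, mem_ofPred_eq, and_assoc] using h

/-- Scale invariance of the SPMESL estimator (Proposition 1, minimizer form):
`(b, σ)` minimizes the scaled-design objective iff `(b°, σ°)` with
`b°ⱼ = √(sₖₖ/sⱼⱼ)·bⱼ` and `σ° = √sₖₖ·σ` minimizes the original-design objective;
consequently `−b°ⱼ/(σ°)² = (sⱼⱼsₖₖ)^{−1/2}·(−bⱼ/σ²)` for all `j`. -/
theorem spmesl_scale_invariance (n p : ℕ) (hn : 0 < n)
    (X : Matrix (Fin n) (Fin p) ℝ) (s : Fin p → ℝ) (hs : ∀ j, 0 < s j)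
    (k : Fin p) (lam0 : ℝ) (hlam0 : 0 ≤ lam0) (b : Fin p → ℝ) (σ : ℝ) :
    ((b k = -1 ∧ 0 < σ ∧
        ∀ (b' : Fin p → ℝ) (σ' : ℝ), b' k = -1 → 0 < σ' →
          spmeslObjScaled n p X s k lam0 b σ ≤ spmeslObjScaled n p X s k lam0 b' σ') ↔
      ((fun j => Real.sqrt (s k / s j) * b j) k = -1 ∧ 0 < Real.sqrt (s k) * σ ∧
        ∀ (b' : Fin p → ℝ) (σ' : ℝ), b' k = -1 → 0 < σ' →
          spmeslObjOrig n p X s k lam0 (fun j => Real.sqrt (s k / s j) * b j)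
              (Real.sqrt (s k) * σ)
            ≤ spmeslObjOrig n p X s k lam0 b' σ')) ∧
    (0 < σ → ∀ j : Fin p,
      -(Real.sqrt (s k / s j) * b j) / (Real.sqrt (s k) * σ) ^ 2
        = (1 / Real.sqrt (s j * s k)) * (-(b j) / σ ^ 2)) :=
  spmesl_scale_invariance_general n p X s hs k lam0 b σ
end

section
/- Row-wise parallel coordinate update (Proposition 2): let X be an n×p real matrix whose columns satisfy xⱼᵀxⱼ = n, let λ₁,…,λ_p ≥ 0, let B be a p×p real matrix with zero diagonal, and let E = X − XB be the current residual matrix with columns eₖ = xₖ − Xbₖ. Fix a row index j and define a ∈ ℝᵖ by a = xⱼᵀE/n + B_{j·} (so its k-th entry is aₖ = xⱼᵀeₖ/n + Bⱼₖ), set aⱼ = 0, and define B' to agree with B except that B'ⱼₖ = Soft_{λₖ}(aₖ) for k ≠ j and B'ⱼⱼ = 0. Then: (i) for every k ≠ j, B'ⱼₖ is the unique minimizer over t ∈ ℝ of t ↦ (1/(2n))‖xₖ − Σ_{l≠j} x_l Bₗₖ − xⱼ t‖₂² + λₖ|t|, i.e., the row update performs simultaneously the single-coordinate cyclic CD update at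 coordinate j for all p column problems; and (ii) the updated residual satisfies E + xⱼ(B_{j·} − B'_{j·}) = X − XB'. -/
/-!
Each column problem, restricted to coordinate `j`, is `½(t − c)² + λ|t|` up to a constant,
because `‖xⱼ‖² = n`; here `c` is the correlation of `xⱼ` with the partial residual that
omits coordinate `j`, and adding `Bⱼₖ` back to `xⱼᵀeₖ/n` produces exactly this `c = aₖ`.
Soft thresholding minimises `½(t − c)² + λ|t|` strictly, since `c − Soft_λ(c)` is a
subgradient of `λ|·|` at `Soft_λ(c)` and the quadratic part is `1`-strongly convex.
The residual identity holds because `B − B'` is supported on row `j`.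
-/

/-- The soft-thresholding operator `Soft_λ(a) = sign(a)·(|a| − λ)₊`. -/
noncomputable def softThreshold (lam a : ℝ) : ℝ :=
  Real.sign a * max (|a| - lam) 0

open Finset

section SoftThreshold

variable {lam c : ℝ}

lemma softThreshold_eq_zero (h : |c| ≤ lam) : softThreshold lam c = 0 := by
  rw [softThreshold, max_eq_right (by linarith), mul_zero]

lemma softThreshold_of_lt (hlam : 0 ≤ lam) (h : lam < c) : softThreshold lam c = c - lam := by
  have hc : 0 < c := by linarith
  rw [softThreshold, Real.sign_of_pos hc, abs_of_pos hc, max_eq_left (by linarith), one_mul]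

lemma softThreshold_of_lt_neg (hlam : 0 ≤ lam) (h : c < -lam) :
    softThreshold lam c = c + lam := by
  have hc : c < 0 := by linarith
  rw [softThreshold, Real.sign_of_neg hc, abs_of_neg hc, max_eq_left (by linarith)]
  ring

/-- `c − Soft_λ(c)` is a subgradient of `λ|·|` at `Soft_λ(c)`. -/
lemma softThreshold_subgradient (hlam : 0 ≤ lam) :
    |c - softThreshold lam c| ≤ lam ∧
      (c - softThreshold lam c) * softThreshold lam c = lam * |softThreshold lam c| := by
  rcases le_or_gt |c| lam with h | h
  · rw [softThreshold_eq_zero h, sub_zero]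
    simpa using h
  rcases lt_or_gt_of_ne (show c ≠ 0 by rintro rfl; rw [abs_zero] at h; linarith) with hc | hc
  · have hlt : c < -lam := by rw [abs_of_neg hc] at h; linarith
    rw [softThreshold_of_lt_neg hlam hlt, abs_of_neg (by linarith : c + lam < 0)]
    constructor
    · rw [show c - (c + lam) = -lam by ring, abs_neg, abs_of_nonneg hlam]
    · ring
  · have hlt : lam < c := by rwa [abs_of_pos hc] at h
    rw [softThreshold_of_lt hlam hlt, abs_of_pos (by linarith : 0 < c - lam)]
    constructor
    · rw [show c - (c - lam) = lam by ring, abs_of_nonneg hlam]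
    · ring

lemma half_sq_add_abs_ge_of_subgradient {s t : ℝ} (hle : |c - s| ≤ lam)
    (hs : (c - s) * s = lam * |s|) :
    (1 / 2) * (s - c) ^ 2 + lam * |s| + (1 / 2) * (t - s) ^ 2
      ≤ (1 / 2) * (t - c) ^ 2 + lam * |t| := by
  have ht : (c - s) * t ≤ lam * |t| :=
    (le_abs_self _).trans (abs_mul (c - s) t ▸ mul_le_mul_of_nonneg_right hle (abs_nonneg t))
  nlinarith

lemma softThreshold_strict_min (hlam : 0 ≤ lam) {t : ℝ} (ht : t ≠ softThreshold lam c) :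
    (1 / 2) * (softThreshold lam c - c) ^ 2 + lam * |softThreshold lam c|
      < (1 / 2) * (t - c) ^ 2 + lam * |t| := by
  obtain ⟨hle, hs⟩ := softThreshold_subgradient (c := c) hlam
  have hpos : 0 < (t - softThreshold lam c) ^ 2 := by
    have := sub_ne_zero.2 ht
    positivity
  linarith [half_sq_add_abs_ge_of_subgradient (t := t) hle hs]

end SoftThreshold

section CoordinateLasso

variable {ι : Type*} [Fintype ι] {x : ι → ℝ} {N : ℝ}

lemma sum_sq_sub_mul_div_eq (hN : N ≠ 0) (hx : ∑ i, x i ^ 2 = N) (r : ι → ℝ) (t : ℝ) :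
    1 / (2 * N) * ∑ i, (r i - x i * t) ^ 2
      = 1 / (2 * N) * ∑ i, r i ^ 2 - ((∑ i, x i * r i) / N) ^ 2 / 2
        + (1 / 2) * (t - (∑ i, x i * r i) / N) ^ 2 := by
  have hexpand : ∑ i, (r i - x i * t) ^ 2
      = ∑ i, r i ^ 2 - 2 * t * ∑ i, x i * r i + t ^ 2 * ∑ i, x i ^ 2 := by
    simp only [mul_sum, ← sum_sub_distrib, ← sum_add_distrib]
    exact sum_congr rfl fun i _ => by ring
  rw [hexpand, hx]
  field_simp
  ring

lemma lasso_coordinate_strict_min (hN : N ≠ 0) (hx : ∑ i, x i ^ 2 = N) (r : ι → ℝ)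
    {lam : ℝ} (hlam : 0 ≤ lam) {t : ℝ}
    (ht : t ≠ softThreshold lam ((∑ i, x i * r i) / N)) :
    1 / (2 * N) * ∑ i, (r i - x i * softThreshold lam ((∑ i, x i * r i) / N)) ^ 2
        + lam * |softThreshold lam ((∑ i, x i * r i) / N)|
      < 1 / (2 * N) * ∑ i, (r i - x i * t) ^ 2 + lam * |t| := by
  rw [sum_sq_sub_mul_div_eq hN hx, sum_sq_sub_mul_div_eq hN hx]
  linarith [softThreshold_strict_min hlam ht]

lemma sum_mul_sub_mul_div_add (hN : N ≠ 0) (hx : ∑ i, x i ^ 2 = N) (r : ι → ℝ) (b : ℝ) :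
    (∑ i, x i * (r i - x i * b)) / N + b = (∑ i, x i * r i) / N := by
  have hsplit : ∑ i, x i * (r i - x i * b) = ∑ i, x i * r i - b * ∑ i, x i ^ 2 := by
    rw [mul_sum, ← sum_sub_distrib]
    exact sum_congr rfl fun i _ => by ring
  rw [hsplit, hx]
  field_simp
  ring

end CoordinateLasso

section Residual

variable {m p q R : Type*} [Fintype p] [DecidableEq p] [Ring R]

lemma Matrix.mul_apply_eq_sum_erase_add (X : Matrix m p R) (B : Matrix p q R) (i : m) (k : q)
    (j : p) : (X * B) i k = ∑ l ∈ univ.erase j, X i l * B l k + X i j * B j k := by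
  rw [Matrix.mul_apply, sum_erase_add _ _ (mem_univ j)]

lemma Matrix.sub_mul_add_vecMulVec_of_eq_off_row (X : Matrix m p R) {B B' : Matrix p q R}
    (j : p) (hB' : ∀ l, l ≠ j → ∀ k, B' l k = B l k) :
    X * B' = X * B - Matrix.vecMulVec (fun i => X i j) (fun k => B j k - B' j k) := by
  ext i k
  have hoff : ∑ l ∈ univ.erase j, X i l * B' l k = ∑ l ∈ univ.erase j, X i l * B l k :=
    sum_congr rfl fun l hl => by rw [hB' l (ne_of_mem_erase hl)]
  rw [Matrix.sub_apply, Matrix.vecMulVec_apply, Matrix.mul_apply_eq_sum_erase_add _ _ _ _ j,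
    Matrix.mul_apply_eq_sum_erase_add _ _ _ _ j, hoff]
  noncomm_ring

end Residual

theorem rowwise_parallel_cd_update_general (n p : ℕ) (hn : 0 < n)
    (X : Matrix (Fin n) (Fin p) ℝ) (hX : ∀ j : Fin p, ∑ i, (X i j) ^ 2 = (n : ℝ))
    (lam : Fin p → ℝ) (hlam : ∀ k, 0 ≤ lam k)
    (B : Matrix (Fin p) (Fin p) ℝ) (j : Fin p)
    (a : Fin p → ℝ)
    (ha : ∀ k : Fin p, k ≠ j →
      a k = (∑ i, X i j * (X i k - (X * B) i k)) / (n : ℝ) + B j k)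
    (B' : Matrix (Fin p) (Fin p) ℝ)
    (hB'j : ∀ k : Fin p, B' j k = if k = j then 0 else softThreshold (lam k) (a k))
    (hB'rows : ∀ l : Fin p, l ≠ j → ∀ k : Fin p, B' l k = B l k) :
    (∀ k : Fin p, k ≠ j → ∀ t : ℝ, t ≠ B' j k →
      (1 / (2 * (n : ℝ))) * ∑ i,
          (X i k - (∑ l ∈ Finset.univ.erase j, X i l * B l k) - X i j * B' j k) ^ 2
        + lam k * |B' j k|
      < (1 / (2 * (n : ℝ))) * ∑ i,
          (X i k - (∑ l ∈ Finset.univ.erase j, X i l * B l k) - X i j * t) ^ 2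
        + lam k * |t|) ∧
    (X - X * B) + Matrix.vecMulVec (fun i => X i j) (fun k => B j k - B' j k)
      = X - X * B' := by
  have hn' : (n : ℝ) ≠ 0 := by positivity
  refine ⟨fun k hk t ht => ?_, ?_⟩
  · set r : Fin n → ℝ := fun i => X i k - ∑ l ∈ univ.erase j, X i l * B l k
    have hak : a k = (∑ i, X i j * r i) / n := by
      rw [ha k hk, ← sum_mul_sub_mul_div_add hn' (hX j) r (B j k)]
      simp only [r, Matrix.mul_apply_eq_sum_erase_add X B _ k j, sub_sub]
    rw [hB'j k, if_neg hk, hak] at ht ⊢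
    exact lasso_coordinate_strict_min hn' (hX j) r (hlam k) ht
  · rw [Matrix.sub_mul_add_vecMulVec_of_eq_off_row X j hB'rows]
    abel

/-- Row-wise parallel coordinate update (Proposition 2): with `aₖ = xⱼᵀeₖ/n + Bⱼₖ`,
`aⱼ = 0`, and `B'` equal to `B` except `B'ⱼₖ = Soft_{λₖ}(aₖ)` for `k ≠ j`, `B'ⱼⱼ = 0`:
(i) for every `k ≠ j`, `B'ⱼₖ` is the unique minimizer of the single-coordinate Lasso
subproblem at coordinate `j` for column `k`; and (ii) the updated residual satisfies
`E + xⱼ(B_{j·} − B'_{j·}) = X − XB'`. -/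
theorem rowwise_parallel_cd_update (n p : ℕ) (hn : 0 < n)
    (X : Matrix (Fin n) (Fin p) ℝ) (hX : ∀ j : Fin p, ∑ i, (X i j) ^ 2 = (n : ℝ))
    (lam : Fin p → ℝ) (hlam : ∀ k, 0 ≤ lam k)
    (B : Matrix (Fin p) (Fin p) ℝ) (hB : ∀ k, B k k = 0) (j : Fin p)
    (a : Fin p → ℝ)
    (ha : ∀ k : Fin p, k ≠ j →
      a k = (∑ i, X i j * (X i k - (X * B) i k)) / (n : ℝ) + B j k)
    (haj : a j = 0)
    (B' : Matrix (Fin p) (Fin p) ℝ)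
    (hB'j : ∀ k : Fin p, B' j k = if k = j then 0 else softThreshold (lam k) (a k))
    (hB'rows : ∀ l : Fin p, l ≠ j → ∀ k : Fin p, B' l k = B l k) :
    (∀ k : Fin p, k ≠ j → ∀ t : ℝ, t ≠ B' j k →
      (1 / (2 * (n : ℝ))) * ∑ i,
          (X i k - (∑ l ∈ Finset.univ.erase j, X i l * B l k) - X i j * B' j k) ^ 2
        + lam k * |B' j k|
      < (1 / (2 * (n : ℝ))) * ∑ i,
          (X i k - (∑ l ∈ Finset.univ.erase j, X i l * B l k) - X i j * t) ^ 2
        + lam k * |t|) ∧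
    (X - X * B) + Matrix.vecMulVec (fun i => X i j) (fun k => B j k - B' j k)
      = X - X * B' :=
  rowwise_parallel_cd_update_general n p hn X hX lam hlam B j a ha B' hB'j hB'rows
end
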